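/- Let V be a subset of ℝⁿ such that the structural dimension of V at every point equals n (the ambient dimension). Then for every y ∈ V, the linear map from T_yV to ℝⁿ sending a point derivation v to (v(q_1), …, v(q_n)), where q_i is the restriction to V of the i-th coordinate function on ℝⁿ, is a linear isomorphism; in particular dim T_yV = n for every y ∈ V. -/

import Mathlib

noncomputable section

/-- `C^∞(S)`: the `ℝ`-algebra of functions `f : S → ℝ` that locally extend to smooth
functions on `ℝⁿ`. -/
def Csm (n : ℕ) (S : Set (Fin n → ℝ)) : Subalgebra ℝ (S → ℝ) where
  carrier := {f | ∀ x : S, ∃ U : Set (Fin n → ℝ), IsOpen U ∧ (x : Fin n → ℝ) ∈ U ∧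
      ∃ F : (Fin n → ℝ) → ℝ, ContDiff ℝ (⊤ : ℕ∞) F ∧ ∀ y : S, (y : Fin n → ℝ) ∈ U → f y = F y}
  mul_mem' := by
    intro f g hf hg x
    obtain ⟨U, hU, hxU, F, hF, hFf⟩ := hf x
    obtain ⟨V, hV, hxV, G, hG, hGg⟩ := hg x
    exact ⟨U ∩ V, hU.inter hV, ⟨hxU, hxV⟩, F * G, hF.mul hG,
      fun y hy => by simp [Pi.mul_apply, hFf y hy.1, hGg y hy.2]⟩
  add_mem' := by
    intro f g hf hg x
    obtain ⟨U, hU, hxU, F, hF, hFf⟩ := hf x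
    obtain ⟨V, hV, hxV, G, hG, hGg⟩ := hg x
    exact ⟨U ∩ V, hU.inter hV, ⟨hxU, hxV⟩, F + G, hF.add hG,
      fun y hy => by simp [Pi.add_apply, hFf y hy.1, hGg y hy.2]⟩
  one_mem' := by
    intro x
    exact ⟨Set.univ, isOpen_univ, trivial, 1, contDiff_const, fun y _ => rfl⟩
  zero_mem' := by
    intro x
    exact ⟨Set.univ, isOpen_univ, trivial, 0, contDiff_const, fun y _ => rfl⟩
  algebraMap_mem' := by
    intro r x
    exact ⟨Set.univ, isOpen_univ, trivial, fun _ => r, contDiff_const, fun y _ => rfl⟩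

/-- `R(S)`: the `ℝ`-algebra of restrictions to `S` of smooth functions on `ℝⁿ`. -/
def Rres (n : ℕ) (S : Set (Fin n → ℝ)) : Subalgebra ℝ (S → ℝ) where
  carrier := {f | ∃ F : (Fin n → ℝ) → ℝ, ContDiff ℝ (⊤ : ℕ∞) F ∧ ∀ y : S, f y = F y}
  mul_mem' := by
    rintro f g ⟨F, hF, hFf⟩ ⟨G, hG, hGg⟩
    exact ⟨F * G, hF.mul hG, fun y => by simp [Pi.mul_apply, hFf y, hGg y]⟩
  add_mem' := by
    rintro f g ⟨F, hF, hFf⟩ ⟨G, hG, hGg⟩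
    exact ⟨F + G, hF.add hG, fun y => by simp [Pi.add_apply, hFf y, hGg y]⟩
  one_mem' := ⟨1, contDiff_const, fun _ => rfl⟩
  zero_mem' := ⟨0, contDiff_const, fun _ => rfl⟩
  algebraMap_mem' := fun r => ⟨fun _ => r, contDiff_const, fun _ => rfl⟩

/-- `C^∞(ℝⁿ)`: the `ℝ`-algebra of smooth functions on `ℝⁿ`. -/
def CsmAll (n : ℕ) : Subalgebra ℝ ((Fin n → ℝ) → ℝ) where
  carrier := {F | ContDiff ℝ (⊤ : ℕ∞) F}
  mul_mem' := fun {F G} (hF : ContDiff ℝ (⊤ : ℕ∞) F) (hG : ContDiff ℝ (⊤ : ℕ∞) G) => hF.mul hG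
  add_mem' := fun {F G} (hF : ContDiff ℝ (⊤ : ℕ∞) F) (hG : ContDiff ℝ (⊤ : ℕ∞) G) => hF.add hG
  one_mem' := show ContDiff ℝ (⊤ : ℕ∞) (1 : (Fin n → ℝ) → ℝ) from contDiff_const
  zero_mem' := show ContDiff ℝ (⊤ : ℕ∞) (0 : (Fin n → ℝ) → ℝ) from contDiff_const
  algebraMap_mem' := fun r => show ContDiff ℝ (⊤ : ℕ∞) (fun _ => r) from contDiff_const

/-- A point derivation at `x` of an algebra `A` of real-valued functions on `X`. -/
def IsPtDeriv {X : Type*} (A : Subalgebra ℝ (X → ℝ)) (x : X) (v : A →ₗ[ℝ] ℝ) : Prop :=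
  ∀ f g : A, v (f * g) = v f * (g : X → ℝ) x + (f : X → ℝ) x * v g

/-- The tangent space `T_x S`: the vector space of point derivations of `C^∞(S)` at `x`. -/
def TangentAt (n : ℕ) (S : Set (Fin n → ℝ)) (x : S) :
    Submodule ℝ ((Csm n S) →ₗ[ℝ] ℝ) where
  carrier := {v | IsPtDeriv (Csm n S) x v}
  add_mem' := by
    intro v w hv hw f g
    simp only [LinearMap.add_apply, hv f g, hw f g]
    ring
  zero_mem' := by
    intro f g
    simp
  smul_mem' := by
    intro c v hv f g
    simp only [LinearMap.smul_apply, hv f g, smul_eq_mul]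
    ring

/-- A smooth map between subsets of Euclidean spaces: it locally extends to a smooth
map of the ambient Euclidean spaces. -/
def SmoothMapSub (n m : ℕ) (S : Set (Fin n → ℝ)) (T : Set (Fin m → ℝ)) (φ : S → T) : Prop :=
  ∀ x : S, ∃ U : Set (Fin n → ℝ), IsOpen U ∧ (x : Fin n → ℝ) ∈ U ∧
    ∃ Φ : (Fin n → ℝ) → (Fin m → ℝ), ContDiff ℝ (⊤ : ℕ∞) Φ ∧
      ∀ y : S, (y : Fin n → ℝ) ∈ U → ((φ y : Fin m → ℝ)) = Φ y

/-- Two subsets of Euclidean spaces are diffeomorphic: there is a smooth bijection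
with smooth inverse. -/
def DiffeoSubsets (n m : ℕ) (A : Set (Fin n → ℝ)) (B : Set (Fin m → ℝ)) : Prop :=
  ∃ (φ : A → B) (ψ : B → A), SmoothMapSub n m A B φ ∧ SmoothMapSub m n B A ψ ∧
    Function.LeftInverse ψ φ ∧ Function.RightInverse ψ φ

/-- The structural dimension of `S` at `x`: the smallest `m` such that some open
neighbourhood of `x` in `S` (subspace topology) is diffeomorphic to a subset of `ℝ^m`. -/
def structDimAt (n : ℕ) (S : Set (Fin n → ℝ)) (x : Fin n → ℝ) : ℕ :=
  sInf {m | ∃ U : Set (Fin n → ℝ), x ∈ U ∧ (∃ W, IsOpen W ∧ U = W ∩ S) ∧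
    ∃ V : Set (Fin m → ℝ), DiffeoSubsets n m U V}

/-- `x` is a structurally regular point of `S` if the structural dimension is constant
on some open neighbourhood of `x` in `S`. -/
def StructRegular (n : ℕ) (S : Set (Fin n → ℝ)) (x : Fin n → ℝ) : Prop :=
  ∃ W : Set (Fin n → ℝ), IsOpen W ∧ x ∈ W ∧
    ∀ y ∈ W ∩ S, structDimAt n S y = structDimAt n S x

/-- The restriction to `S` of the `i`-th coordinate function, as an element of `C^∞(S)`. -/
def coordFn (n : ℕ) (S : Set (Fin n → ℝ)) (i : Fin n) : Csm n S :=
  ⟨fun y => (y : Fin n → ℝ) i, fun _ => ⟨Set.univ, isOpen_univ, trivial, fun z => z i,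
    contDiff_pi.mp contDiff_id i, fun _ _ => rfl⟩⟩

/-- The restriction to `S` of a globally smooth function belongs to `C^∞(S)`. -/
theorem restrict_mem_Csm {n : ℕ} (S : Set (Fin n → ℝ)) {F : (Fin n → ℝ) → ℝ}
    (hF : ContDiff ℝ (⊤ : ℕ∞) F) : (fun y : S => F y) ∈ Csm n S :=
  fun _ => ⟨Set.univ, isOpen_univ, trivial, F, hF, fun _ _ => rfl⟩


open scoped ContDiff Topology
open Metric Set MeasureTheory
set_option synthInstance.maxHeartbeats 1000000
set_option maxHeartbeats 2000000

section Param
variable {E : Type} [NormedAddCommGroup E] [NormedSpace ℝ E] [FiniteDimensional ℝ E]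

theorem cont_param {F : Type} [NormedAddCommGroup F] [NormedSpace ℝ F]
    {K : E × ℝ → F} (hK : Continuous K) :
    Continuous fun x => ∫ t in (0:ℝ)..1, K (x, t) := by
  rw [continuous_iff_continuousAt]
  intro x₀
  obtain ⟨C, hC⟩ := ((isCompact_closedBall x₀ 1).prod isCompact_Icc).exists_bound_of_continuousOn
      (hK.continuousOn (s := closedBall x₀ 1 ×ˢ Icc (0:ℝ) 1))
  apply intervalIntegral.continuousAt_of_dominated_interval (bound := fun _ => C)
  · filter_upwards with x
    exact (hK.comp (continuous_const.prodMk continuous_id)).aestronglyMeasurable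
  · filter_upwards [closedBall_mem_nhds x₀ one_pos] with x hx
    filter_upwards with t ht
    exact hC (x, t) ⟨hx, Ioc_subset_Icc_self (by simpa using ht)⟩
  · exact intervalIntegrable_const
  · filter_upwards with t _
    exact (hK.comp (continuous_id.prodMk continuous_const)).continuousAt

theorem contDiff_param (n : ℕ) : ∀ (F : Type) [NormedAddCommGroup F] [NormedSpace ℝ F]
    [CompleteSpace F] (K : E × ℝ → F), ContDiff ℝ ∞ K →
    ContDiff ℝ n fun x => ∫ t in (0:ℝ)..1, K (x, t) := by
  induction n with
  | zero =>
    intro F _ _ _ K hK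
    exact contDiff_zero.2 (cont_param hK.continuous)
  | succ n ih =>
    intro F _ _ _ K hK
    have h1 : (∞ : WithTop ℕ∞) ≠ 0 := by simp
    set K' : E × ℝ → (E →L[ℝ] F) :=
      fun p => (fderiv ℝ K p).comp (ContinuousLinearMap.inl ℝ E ℝ) with hK'def
    have hK' : ContDiff ℝ ∞ K' := by
      have hfd : ContDiff ℝ ∞ (fderiv ℝ K) := hK.fderiv_right (le_refl _)
      exact (((ContinuousLinearMap.compL ℝ E (E × ℝ) F).flip
        (ContinuousLinearMap.inl ℝ E ℝ)).contDiff).comp hfd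
    have hDiff : ∀ (x : E) (t : ℝ), HasFDerivAt (fun x => K (x, t)) (K' (x, t)) x := by
      intro x t
      exact ((hK.differentiable h1) (x, t)).hasFDerivAt.comp x
        (hasFDerivAt_prodMk_left x t)
    have hfd : ∀ x₀ : E, HasFDerivAt (fun x => ∫ t in (0:ℝ)..1, K (x, t))
        (∫ t in (0:ℝ)..1, K' (x₀, t)) x₀ := by
      intro x₀
      obtain ⟨C, hC⟩ :=
        ((isCompact_closedBall x₀ 1).prod isCompact_Icc).exists_bound_of_continuousOn
          (hK'.continuous.continuousOn (s := closedBall x₀ 1 ×ˢ Icc (0:ℝ) 1))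
      apply intervalIntegral.hasFDerivAt_integral_of_dominated_of_fderiv_le
        (F' := fun x t => K' (x, t)) (bound := fun _ => C) (s := ball x₀ 1) (ball_mem_nhds x₀ one_pos)
      · filter_upwards with x
        exact (hK.continuous.comp (continuous_const.prodMk continuous_id)).aestronglyMeasurable
      · exact (hK.continuous.comp
          (continuous_const.prodMk continuous_id)).intervalIntegrable _ _
      · exact (hK'.continuous.comp
          (continuous_const.prodMk continuous_id)).aestronglyMeasurable
      · filter_upwards with t ht x hx
        exact hC (x, t) ⟨ball_subset_closedBall hx, Ioc_subset_Icc_self (by simpa using ht)⟩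
      · exact intervalIntegrable_const
      · filter_upwards with t ht x _
        exact hDiff x t
    rw [show (((n+1 : ℕ)) : WithTop ℕ∞) = (n : WithTop ℕ∞) + 1 by push_cast; ring,
      contDiff_succ_iff_fderiv]
    refine ⟨fun x => (hfd x).differentiableAt, by simp, ?_⟩
    have : fderiv ℝ (fun x => ∫ t in (0:ℝ)..1, K (x, t)) =
        fun x₀ => ∫ t in (0:ℝ)..1, K' (x₀, t) := funext fun x₀ => (hfd x₀).fderiv
    rw [this]
    exact ih (E →L[ℝ] F) K' hK'

end Param

theorem hadamard {d : ℕ} {F : (Fin d → ℝ) → ℝ} (hF : ContDiff ℝ ∞ F) (c : Fin d → ℝ) :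
    ∃ G : Fin d → (Fin d → ℝ) → ℝ, (∀ i, ContDiff ℝ ∞ (G i)) ∧
      (∀ i, G i c = fderiv ℝ F c (Pi.single i 1)) ∧
      ∀ x, F x = F c + ∑ i, (x i - c i) * G i x := by
  set e : Fin d → (Fin d → ℝ) := fun i => Pi.single i 1 with hedef
  set γ : ((Fin d → ℝ) × ℝ) → (Fin d → ℝ) := fun p => c + p.2 • (p.1 - c) with hγdef
  have hγ : ContDiff ℝ ∞ γ :=
    contDiff_const.add (contDiff_snd.smul (contDiff_fst.sub contDiff_const))
  set K : Fin d → ((Fin d → ℝ) × ℝ) → ℝ :=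
    fun i p => fderiv ℝ F (γ p) (e i) with hKdef
  have hKi : ∀ i, ContDiff ℝ ∞ (K i) := fun i =>
    ((ContinuousLinearMap.apply ℝ ℝ (e i)).contDiff).comp
      ((hF.fderiv_right le_rfl).comp hγ)
  refine ⟨fun i x => ∫ t in (0:ℝ)..1, K i (x, t), fun i =>
    contDiff_infty.2 fun n => contDiff_param n ℝ (K i) (hKi i), fun i => ?_, fun x => ?_⟩
  · have : ∀ t : ℝ, K i (c, t) = fderiv ℝ F c (Pi.single i 1) := by
      intro t; simp [hKdef, hγdef, hedef]
    simp only [this, intervalIntegral.integral_const]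
    simp
  · have h1 : (∞ : WithTop ℕ∞) ≠ 0 := by simp
    have hder : ∀ t : ℝ, HasDerivAt (fun t => F (γ (x, t)))
        (fderiv ℝ F (γ (x, t)) (x - c)) t := by
      intro t
      have h2 : HasDerivAt (fun t : ℝ => γ (x, t)) (x - c) t := by
        simpa [hγdef] using (((hasDerivAt_id t).smul_const (x - c)).const_add c)
      exact (((hF.differentiable h1) (γ (x, t))).hasFDerivAt).comp_hasDerivAt t h2
    have hcont : Continuous fun t => fderiv ℝ F (γ (x, t)) (x - c) :=
      ((ContinuousLinearMap.apply ℝ ℝ (x - c)).continuous).comp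
        ((hF.continuous_fderiv h1).comp (hγ.continuous.comp
          (continuous_const.prodMk continuous_id)))
    have hFTC : F x - F c = ∫ t in (0:ℝ)..1, fderiv ℝ F (γ (x, t)) (x - c) := by
      have := intervalIntegral.integral_eq_sub_of_hasDerivAt
        (f := fun t => F (γ (x, t))) (fun t _ => hder t)
        (hcont.intervalIntegrable 0 1)
      rw [this]
      simp [hγdef]
    have hxc : (x - c) = ∑ i, (x i - c i) • e i := by
      funext j
      rw [Finset.sum_apply]
      simp [hedef, Pi.single_apply]
    have hexp : ∀ t : ℝ, fderiv ℝ F (γ (x, t)) (x - c) = ∑ i, (x i - c i) * K i (x, t) := by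
      intro t
      rw [hxc, map_sum]
      exact Finset.sum_congr rfl fun i _ => by
        rw [ContinuousLinearMap.map_smul]; rfl
    rw [← sub_eq_iff_eq_add', hFTC]
    simp only [hexp]
    rw [intervalIntegral.integral_finset_sum]
    · exact Finset.sum_congr rfl fun i _ => intervalIntegral.integral_const_mul _ _
    · intro i _
      exact (continuous_const.mul ((hKi i).continuous.comp
        (continuous_const.prodMk continuous_id))).intervalIntegrable 0 1

theorem exists_bump_fn {d : ℕ} {N : Set (Fin d → ℝ)} (hN : IsOpen N) {z₀ : Fin d → ℝ}
    (hz₀ : z₀ ∈ N) :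
    ∃ (χ : (Fin d → ℝ) → ℝ) (C : Set (Fin d → ℝ)), ContDiff ℝ ∞ χ ∧ IsClosed C ∧ C ⊆ N ∧
      (∀ z ∉ C, χ z = 0) ∧ ∃ N₁ : Set (Fin d → ℝ), IsOpen N₁ ∧ z₀ ∈ N₁ ∧ ∀ z ∈ N₁, χ z = 1 := by
  set L := EuclideanSpace.equiv (Fin d) ℝ with hL
  set NE : Set (EuclideanSpace ℝ (Fin d)) := ⇑L ⁻¹' N with hNE
  have hNEo : IsOpen NE := hN.preimage L.continuous
  have hpin : L.symm z₀ ∈ NE := by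
    simp only [hNE, Set.mem_preimage, ContinuousLinearEquiv.apply_symm_apply]
    exact hz₀
  obtain ⟨ε, hε, hball⟩ := Metric.isOpen_iff.1 hNEo _ hpin
  set f : ContDiffBump (L.symm z₀) := ⟨ε/3, ε/2, by positivity, by linarith⟩ with hf
  refine ⟨fun z => f (L.symm z), ⇑L.symm ⁻¹' (closedBall (L.symm z₀) (ε/2)),
    f.contDiff.comp L.symm.contDiff, (isClosed_closedBall).preimage L.symm.continuous, ?_, ?_, ?_⟩
  · intro z hz
    have hd : dist (L.symm z) (L.symm z₀) ≤ ε/2 := Metric.mem_closedBall.1 hz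
    have h1 : L.symm z ∈ NE := hball (Metric.mem_ball.2 (lt_of_le_of_lt hd (by linarith)))
    simpa only [hNE, Set.mem_preimage, ContinuousLinearEquiv.apply_symm_apply] using h1
  · intro z hz
    exact f.zero_of_le_dist (le_of_lt (by simpa [Metric.mem_closedBall] using hz))
  · refine ⟨⇑L.symm ⁻¹' (ball (L.symm z₀) (ε/3)), isOpen_ball.preimage L.symm.continuous,
      Set.mem_preimage.2 (Metric.mem_ball_self (by positivity)), fun z hz => ?_⟩
    exact f.one_of_mem_closedBall (ball_subset_closedBall hz)

theorem exists_global_ext {d e : ℕ} {g : (Fin d → ℝ) → (Fin e → ℝ)} {N : Set (Fin d → ℝ)}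
    (hN : IsOpen N) (hg : ContDiffOn ℝ ∞ g N) {z₀ : Fin d → ℝ} (hz₀ : z₀ ∈ N) :
    ∃ (G : (Fin d → ℝ) → (Fin e → ℝ)) (N₁ : Set (Fin d → ℝ)), ContDiff ℝ ∞ G ∧ IsOpen N₁ ∧
      z₀ ∈ N₁ ∧ ∀ z ∈ N₁, G z = g z := by
  obtain ⟨χ, C, hχ, hC, hCN, hχ0, N₁, hN₁o, hzN₁, hχ1⟩ := exists_bump_fn hN hz₀
  classical
  set G : (Fin d → ℝ) → (Fin e → ℝ) := fun z => if z ∈ N then χ z • g z else 0 with hG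
  refine ⟨G, N₁ ∩ N, ?_, hN₁o.inter hN, ⟨hzN₁, hz₀⟩, fun z hz => ?_⟩
  · rw [contDiff_iff_contDiffAt]
    intro z
    by_cases hzN : z ∈ N
    · have h1 : ContDiffAt ℝ ∞ (fun w => χ w • g w) z :=
        hχ.contDiffAt.smul ((hg z hzN).contDiffAt (hN.mem_nhds hzN))
      refine h1.congr_of_eventuallyEq ?_
      filter_upwards [hN.mem_nhds hzN] with w hw
      simp [hG, if_pos hw]
    · have hzC : z ∈ Cᶜ := fun h => hzN (hCN h)
      refine (contDiffAt_const (c := (0 : Fin e → ℝ))).congr_of_eventuallyEq ?_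
      filter_upwards [hC.isOpen_compl.mem_nhds hzC] with w hw
      by_cases hwN : w ∈ N
      · simp [hG, if_pos hwN, hχ0 w hw]
      · simp [hG, if_neg hwN]
  · simp [hG, if_pos hz.2, hχ1 z hz.1]


open scoped ContDiff Topology
open Metric Set MeasureTheory

theorem fderiv_eq_zero_of_vanish {n : ℕ} (V : Set (Fin n → ℝ)) (y : Fin n → ℝ) (hy : y ∈ V)
    (hsd : structDimAt n V y = n) {H : (Fin n → ℝ) → ℝ} (hH : ContDiff ℝ (⊤ : ℕ∞) H)
    {W : Set (Fin n → ℝ)} (hW : IsOpen W) (hyW : y ∈ W) (hvan : ∀ z ∈ W ∩ V, H z = 0) :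
    fderiv ℝ H y = 0 := by
  classical
  have h1 : (∞ : WithTop ℕ∞) ≠ 0 := by simp
  by_contra hD0
  have hex : ∃ j : Fin n, fderiv ℝ H y (Pi.single j 1) ≠ 0 := by
    by_contra hc
    push_neg at hc
    apply hD0
    ext v
    have hv : v = ∑ i, v i • (Pi.single i 1 : Fin n → ℝ) := by
      funext k
      rw [Finset.sum_apply]
      simp [Pi.single_apply]
    rw [hv, map_sum]
    simp [hc]
  obtain ⟨j, hj⟩ := hex
  obtain ⟨m, rfl⟩ : ∃ m, n = m + 1 := ⟨n - 1, (Nat.succ_pred_eq_of_pos j.pos).symm⟩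
  set Φ : (Fin (m+1) → ℝ) → (Fin (m+1) → ℝ) := fun x i => if i = j then H x else x i with hΦdef
  have hΦ : ContDiff ℝ ∞ Φ := by
    apply contDiff_pi.2
    intro i
    by_cases hi : i = j
    · simpa [hΦdef, hi] using hH
    · simpa [hΦdef, hi] using contDiff_apply ℝ ℝ i
  -- invertible derivative at points where ∂ⱼH ≠ 0
  have hA : ∀ x : Fin (m+1) → ℝ, fderiv ℝ H x (Pi.single j 1) ≠ 0 →
      ∃ A : (Fin (m+1) → ℝ) ≃L[ℝ] (Fin (m+1) → ℝ),
        HasFDerivAt Φ (A : (Fin (m+1) → ℝ) →L[ℝ] (Fin (m+1) → ℝ)) x := by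
    intro x hx
    set D := fderiv ℝ H x with hDdef
    set A₀ : (Fin (m+1) → ℝ) →L[ℝ] (Fin (m+1) → ℝ) :=
      ContinuousLinearMap.pi (fun i => if i = j then D else ContinuousLinearMap.proj i) with hA₀
    have hfd : HasFDerivAt Φ A₀ x := by
      apply hasFDerivAt_pi''
      intro i
      have hcomp : (ContinuousLinearMap.proj i).comp A₀ =
          (if i = j then D else ContinuousLinearMap.proj i) := by
        ext v
        simp [hA₀]
      rw [hcomp]
      by_cases hi : i = j
      · subst hi
        have h2 : HasFDerivAt H D x := (hH.differentiable h1 x).hasFDerivAt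
        simpa [hΦdef] using h2
      · simp only [if_neg hi]
        simpa [hΦdef, hi] using hasFDerivAt_apply (𝕜 := ℝ) i x
    have hinj : Function.Injective A₀ := by
      have hker : ∀ v, A₀ v = 0 → v = 0 := by
        intro v hv
        have happ : ∀ i, A₀ v i = (if i = j then D v else v i) := by
          intro i
          by_cases hi : i = j <;> simp [hA₀, hi]
        have hvi : ∀ i, i ≠ j → v i = 0 := by
          intro i hi
          have := congrFun (congrArg (fun f => (f : Fin (m+1) → ℝ)) hv) i
          simpa [happ i, hi] using this
        have hvsingle : v = Pi.single j (v j) := by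
          funext i
          by_cases hi : i = j
          · subst hi; simp
          · simp [Pi.single_apply, hi, hvi i hi]
        have hDv : D v = 0 := by
          have := congrFun (congrArg (fun f => (f : Fin (m+1) → ℝ)) hv) j
          simpa [happ j] using this
        have : v j * D (Pi.single j 1) = 0 := by
          have h3 : D v = v j * D (Pi.single j 1) := by
            conv_lhs => rw [hvsingle]
            have : Pi.single j (v j) = v j • (Pi.single j 1 : Fin (m+1) → ℝ) := by
              funext i; simp [Pi.single_apply]
            rw [this, ContinuousLinearMap.map_smul]; rfl
          rw [← h3, hDv]
        rcases mul_eq_zero.1 this with h | h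
        · rw [hvsingle, h]; simp
        · exact absurd h hx
      intro a b hab
      have : A₀ (a - b) = 0 := by rw [map_sub, hab, sub_self]
      have := hker _ this
      exact sub_eq_zero.1 this
    have hsurj : Function.Surjective A₀ :=
      LinearMap.injective_iff_surjective
        (f := (A₀ : (Fin (m+1) → ℝ) →ₗ[ℝ] (Fin (m+1) → ℝ))) |>.1 hinj
    set Aeq : (Fin (m+1) → ℝ) ≃ₗ[ℝ] (Fin (m+1) → ℝ) :=
      LinearEquiv.ofBijective (A₀ : (Fin (m+1) → ℝ) →ₗ[ℝ] (Fin (m+1) → ℝ)) ⟨hinj, hsurj⟩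
    refine ⟨Aeq.toContinuousLinearEquiv, ?_⟩
    have hcoe : ((Aeq.toContinuousLinearEquiv :
        (Fin (m+1) → ℝ) ≃L[ℝ] (Fin (m+1) → ℝ)) :
        (Fin (m+1) → ℝ) →L[ℝ] (Fin (m+1) → ℝ)) = A₀ := by
      ext v
      rfl
    rw [hcoe]
    exact hfd
  obtain ⟨Ay, hAy⟩ := hA y hj
  set P := (hΦ.contDiffAt (x := y)).toOpenPartialHomeomorph Φ hAy h1 with hPdef
  have hPcoe : ⇑P = Φ := ContDiffAt.toOpenPartialHomeomorph_coe _ _ _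
  have hysrc : y ∈ P.source := ContDiffAt.mem_toOpenPartialHomeomorph_source _ _ _
  have hOopen : IsOpen {x : Fin (m+1) → ℝ | fderiv ℝ H x (Pi.single j 1) ≠ 0} := by
    have hcont : Continuous fun x => fderiv ℝ H x (Pi.single j 1) := by
      exact ((ContinuousLinearMap.apply ℝ ℝ ((Pi.single j 1 : Fin (m+1) → ℝ))).continuous).comp
        (hH.continuous_fderiv h1)
    exact isOpen_compl_singleton.preimage hcont
  set W' := P.source ∩ (W ∩ {x : Fin (m+1) → ℝ | fderiv ℝ H x (Pi.single j 1) ≠ 0}) with hW'def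
  have hW'o : IsOpen W' := P.open_source.inter (hW.inter hOopen)
  have hyW' : y ∈ W' := ⟨hysrc, hyW, hj⟩
  set N := P.target ∩ ⇑P.symm ⁻¹' W' with hNdef
  have hNo : IsOpen N := P.isOpen_inter_preimage_symm hW'o
  have hsymm : ContDiffOn ℝ ∞ (⇑P.symm) N := by
    intro t ht
    obtain ⟨A', hA'⟩ := hA (P.symm t) (ht.2.2.2 : _)
    refine (P.contDiffAt_symm (f₀' := A') ht.1 ?_ ?_).contDiffWithinAt
    · rw [hPcoe]; exact hA'
    · rw [hPcoe]; exact hΦ.contDiffAt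
  set ins : (Fin m → ℝ) → (Fin (m+1) → ℝ) := fun z => Fin.insertNth j 0 z with hinsdef
  have hins : ContDiff ℝ ∞ ins := by
    apply contDiff_pi.2
    refine Fin.succAboveCases j ?_ ?_
    · simpa [hinsdef] using contDiff_const (c := (0:ℝ))
    · intro k
      simpa [hinsdef] using contDiff_apply ℝ ℝ k
  set drop : (Fin (m+1) → ℝ) → (Fin m → ℝ) := fun x k => x (j.succAbove k) with hdropdef
  have hdrop : ContDiff ℝ ∞ drop :=
    contDiff_pi.2 fun k => contDiff_apply ℝ ℝ (j.succAbove k)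
  have hΦeq : ∀ x ∈ W' ∩ V, Φ x = ins (drop x) := by
    rintro x ⟨hxW', hxV⟩
    funext i
    refine Fin.succAboveCases j ?_ ?_ i
    · simp only [hΦdef, hinsdef, if_pos rfl, Fin.insertNth_apply_same]
      exact hvan x ⟨hxW'.2.1, hxV⟩
    · intro k
      simp [hΦdef, hinsdef, hdropdef, (Fin.succAbove_ne j k)]
  have hleft : ∀ x ∈ P.source, P.symm (Φ x) = x := by
    intro x hx
    rw [← hPcoe]
    exact P.left_inv hx
  have hinjU : ∀ x ∈ W' ∩ V, ∀ x' ∈ W' ∩ V, drop x = drop x' → x = x' := by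
    intro x hx x' hx' hdd
    have h2 : Φ x = Φ x' := by rw [hΦeq x hx, hΦeq x' hx', hdd]
    have := P.injOn hx.1.1 hx'.1.1 (by rw [hPcoe]; exact h2)
    exact this
  -- membership in the structural dimension index set
  have hmem : m ∈ {k | ∃ U : Set (Fin (m+1) → ℝ), y ∈ U ∧ (∃ Wo, IsOpen Wo ∧ U = Wo ∩ V) ∧
      ∃ B : Set (Fin k → ℝ), DiffeoSubsets (m+1) k U B} := by
    refine ⟨W' ∩ V, ⟨hyW', hy⟩, ⟨W', hW'o, rfl⟩, drop '' (W' ∩ V), ?_⟩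
    have hψex : ∀ z : ↥(drop '' (W' ∩ V)), ∃ x : ↥(W' ∩ V), drop ↑x = ↑z := by
      rintro ⟨z, hz⟩
      obtain ⟨x, hx, hxz⟩ := hz
      exact ⟨⟨x, hx⟩, hxz⟩
    set φ : ↥(W' ∩ V) → ↥(drop '' (W' ∩ V)) := fun x => ⟨drop ↑x, ⟨↑x, x.2, rfl⟩⟩ with hφdef
    set ψ : ↥(drop '' (W' ∩ V)) → ↥(W' ∩ V) := fun z => Classical.choose (hψex z) with hψdef
    have hψspec : ∀ z, drop ↑(ψ z) = ↑z := fun z => Classical.choose_spec (hψex z)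
    refine ⟨φ, ψ, ?_, ?_, ?_, ?_⟩
    · intro x
      exact ⟨Set.univ, isOpen_univ, trivial, drop, hdrop, fun x' _ => rfl⟩
    · intro z₀
      have hN'o : IsOpen (ins ⁻¹' N) := hNo.preimage hins.continuous
      have hΦψ : ∀ z : ↥(drop '' (W' ∩ V)), ins ↑z = Φ ↑(ψ z) := by
        intro z
        rw [hΦeq _ (ψ z).2, hψspec z]
      have hz₀N' : (z₀ : Fin m → ℝ) ∈ ins ⁻¹' N := by
        have h2 : ins ↑z₀ = Φ ↑(ψ z₀) := hΦψ z₀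
        have h3 : Φ ↑(ψ z₀) ∈ P.target := by
          rw [← hPcoe]; exact P.map_source (ψ z₀).2.1.1
        have h4 : P.symm (Φ ↑(ψ z₀)) = ↑(ψ z₀) := hleft _ (ψ z₀).2.1.1
        refine Set.mem_preimage.2 ?_
        rw [h2]
        exact ⟨h3, by rw [Set.mem_preimage, h4]; exact (ψ z₀).2.1⟩
      have hg : ContDiffOn ℝ ∞ (⇑P.symm ∘ ins) (ins ⁻¹' N) :=
        hsymm.comp hins.contDiffOn (Set.mapsTo_preimage _ _)
      obtain ⟨G, N₁, hG, hN₁o, hzN₁, hGeq⟩ := exists_global_ext hN'o hg hz₀N'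
      refine ⟨N₁, hN₁o, hzN₁, G, hG, ?_⟩
      intro z hz
      have h2 : ins ↑z = Φ ↑(ψ z) := hΦψ z
      rw [hGeq _ hz]
      show (↑(ψ z) : Fin (m+1) → ℝ) = P.symm (ins ↑z)
      rw [h2, hleft _ (ψ z).2.1.1]
    · intro x
      apply Subtype.ext
      exact hinjU _ (ψ (φ x)).2 _ x.2 (by rw [hψspec (φ x)])
    · intro z
      apply Subtype.ext
      exact hψspec z
  have hle : structDimAt (m+1) V y ≤ m := Nat.sInf_le hmem
  rw [hsd] at hle
  omega

/-- If the structural dimension of `V ⊆ ℝⁿ` equals `n` at every point,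
then for every `y ∈ V` the map `T_y V → ℝⁿ`, `v ↦ (v q₁, …, v qₙ)`, is a linear
isomorphism; in particular `dim T_y V = n`. -/
theorem tangentAt_coord_iso_of_structDim_eq_ambient {n : ℕ} (V : Set (Fin n → ℝ))
    (hdim : ∀ y ∈ V, structDimAt n V y = n) (y : V) :
    (∃ e : TangentAt n V y ≃ₗ[ℝ] (Fin n → ℝ),
      ∀ (v : TangentAt n V y) (i : Fin n),
        e v i = (v : Csm n V →ₗ[ℝ] ℝ) (coordFn n V i)) ∧
    Module.rank ℝ ↥(TangentAt n V y) = n := by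
  classical
  have h1 : (∞ : WithTop ℕ∞) ≠ 0 := by simp
  have hsd := hdim ↑y y.2
  have hch : ∀ f : Csm n V, ∃ (F : (Fin n → ℝ) → ℝ), ∃ U : Set (Fin n → ℝ),
      ContDiff ℝ (⊤:ℕ∞) F ∧ IsOpen U ∧ (y : Fin n → ℝ) ∈ U ∧
      ∀ z : V, (z : Fin n → ℝ) ∈ U → (f : V → ℝ) z = F z := by
    intro f
    obtain ⟨U, hU, hyU, F, hF, h⟩ := f.2 y
    exact ⟨F, U, hF, hU, hyU, h⟩
  choose ext extU hsm hop hyextU heq using hch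
  -- well-definedness of the derivative at y
  have hwd : ∀ (F G : (Fin n → ℝ) → ℝ) (U : Set (Fin n → ℝ)), ContDiff ℝ (⊤:ℕ∞) F →
      ContDiff ℝ (⊤:ℕ∞) G → IsOpen U → (y : Fin n → ℝ) ∈ U →
      (∀ z : V, (z : Fin n → ℝ) ∈ U → F z = G z) → fderiv ℝ F ↑y = fderiv ℝ G ↑y := by
    intro F G U hF hG hUo hyU hFG
    have hvan : ∀ z ∈ U ∩ V, (F - G) z = 0 := by
      rintro z ⟨hzU, hzV⟩
      have := hFG ⟨z, hzV⟩ hzU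
      simp [Pi.sub_apply, this]
    have h0 := fderiv_eq_zero_of_vanish V ↑y y.2 hsd (hF.sub hG) hUo hyU hvan
    have hdF : DifferentiableAt ℝ F ↑y := (hF.differentiable h1).differentiableAt
    have hdG : DifferentiableAt ℝ G ↑y := (hG.differentiable h1).differentiableAt
    have h5 : fderiv ℝ (fun x => F x - G x) ↑y = fderiv ℝ F ↑y - fderiv ℝ G ↑y :=
      fderiv_sub hdF hdG
    rw [h5] at h0
    exact sub_eq_zero.1 h0
  set Df : Csm n V → ((Fin n → ℝ) →L[ℝ] ℝ) := fun f => fderiv ℝ (ext f) ↑y with hDf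
  have hDf_spec : ∀ (f : Csm n V) (G : (Fin n → ℝ) → ℝ) (U : Set (Fin n → ℝ)),
      ContDiff ℝ (⊤:ℕ∞) G → IsOpen U → (y : Fin n → ℝ) ∈ U →
      (∀ z : V, (z : Fin n → ℝ) ∈ U → (f : V → ℝ) z = G z) → Df f = fderiv ℝ G ↑y := by
    intro f G U hG hUo hyU hfG
    refine hwd _ _ (extU f ∩ U) (hsm f) hG ((hop f).inter hUo) ⟨hyextU f, hyU⟩ ?_
    intro z hz
    rw [← heq f z hz.1, hfG z hz.2]
  have hadd : ∀ f g : Csm n V, Df (f + g) = Df f + Df g := by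
    intro f g
    have h2 : Df (f + g) = fderiv ℝ (ext f + ext g) ↑y := by
      refine hDf_spec (f + g) (ext f + ext g) (extU f ∩ extU g) ((hsm f).add (hsm g))
        ((hop f).inter (hop g)) ⟨hyextU f, hyextU g⟩ ?_
      intro z hz
      have : ((f + g : Csm n V) : V → ℝ) z = (f : V → ℝ) z + (g : V → ℝ) z := rfl
      rw [this, heq f z hz.1, heq g z hz.2]
      rfl
    rw [h2]
    exact fderiv_fun_add (((hsm f).differentiable h1).differentiableAt)
      (((hsm g).differentiable h1).differentiableAt)
  have hsmul : ∀ (c : ℝ) (f : Csm n V), Df (c • f) = c • Df f := by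
    intro c f
    have h2 : Df (c • f) = fderiv ℝ (c • ext f) ↑y := by
      refine hDf_spec (c • f) (c • ext f) (extU f) (contDiff_const.smul (hsm f))
        (hop f) (hyextU f) ?_
      intro z hz
      have : ((c • f : Csm n V) : V → ℝ) z = c * (f : V → ℝ) z := rfl
      rw [this, heq f z hz]
      rfl
    rw [h2]
    exact fderiv_fun_const_smul (((hsm f).differentiable h1).differentiableAt) c
  have hmul : ∀ f g : Csm n V,
      Df (f * g) = (f : V → ℝ) y • Df g + (g : V → ℝ) y • Df f := by
    intro f g
    have h2 : Df (f * g) = fderiv ℝ (fun x => ext f x * ext g x) ↑y := by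
      refine hDf_spec (f * g) (fun x => ext f x * ext g x) (extU f ∩ extU g)
        ((hsm f).mul (hsm g)) ((hop f).inter (hop g)) ⟨hyextU f, hyextU g⟩ ?_
      intro z hz
      have : ((f * g : Csm n V) : V → ℝ) z = (f : V → ℝ) z * (g : V → ℝ) z := rfl
      rw [this, heq f z hz.1, heq g z hz.2]
    rw [h2, fderiv_fun_mul (((hsm f).differentiable h1).differentiableAt)
      (((hsm g).differentiable h1).differentiableAt)]
    rw [← heq f y (hyextU f), ← heq g y (hyextU g)]
  have hcoord : ∀ i, Df (coordFn n V i) = ContinuousLinearMap.proj i := by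
    intro i
    have h2 : Df (coordFn n V i) =
        fderiv ℝ (⇑(ContinuousLinearMap.proj i : (Fin n → ℝ) →L[ℝ] ℝ)) ↑y := by
      refine hDf_spec _ _ Set.univ (ContinuousLinearMap.proj i : (Fin n → ℝ) →L[ℝ] ℝ).contDiff isOpen_univ
        trivial fun z _ => rfl
    rw [h2, ContinuousLinearMap.fderiv]
  -- the key formula for point derivations
  have hformula : ∀ (v : Csm n V →ₗ[ℝ] ℝ), IsPtDeriv (Csm n V) y v →
      ∀ f : Csm n V, v f = ∑ i, v (coordFn n V i) * Df f (Pi.single i 1) := by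
    intro v hder f
    have hv1 : v 1 = 0 := by
      have h2 := hder 1 1
      have h3 : ((1 : Csm n V) : V → ℝ) y = 1 := rfl
      rw [mul_one, h3] at h2
      linarith
    have hvconst : ∀ r : ℝ, v (algebraMap ℝ (Csm n V) r) = 0 := by
      intro r
      rw [Algebra.algebraMap_eq_smul_one, LinearMap.map_smul, hv1, smul_zero]
    have hloc : ∀ (g : Csm n V) (U : Set (Fin n → ℝ)), IsOpen U → (y : Fin n → ℝ) ∈ U →
        (∀ z : V, (z : Fin n → ℝ) ∈ U → (g : V → ℝ) z = 0) → v g = 0 := by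
      intro g U hUo hyU hg0
      obtain ⟨χ, C, hχ, hCcl, hCU, hχ0, N₁, hN₁o, hyN₁, hχ1⟩ := exists_bump_fn hUo hyU
      set χV : Csm n V := ⟨fun z => χ ↑z, restrict_mem_Csm V hχ⟩ with hχV
      have hgχ : g * χV = 0 := by
        apply Subtype.ext
        funext z
        show (g : V → ℝ) z * χ ↑z = 0
        by_cases hzC : (z : Fin n → ℝ) ∈ C
        · rw [hg0 z (hCU hzC)]; ring
        · rw [hχ0 _ hzC]; ring
      have h2 := hder g χV
      rw [hgχ, map_zero] at h2
      have h3 : (χV : V → ℝ) y = 1 := hχ1 _ hyN₁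
      have h4 : (g : V → ℝ) y = 0 := hg0 y hyU
      rw [h3, h4] at h2
      simpa using h2.symm
    obtain ⟨G, hGsm, hGc, hGid⟩ := hadamard (hsm f) ↑y
    set gi : Fin n → Csm n V := fun i => ⟨fun z => G i ↑z, restrict_mem_Csm V (hGsm i)⟩ with hgi
    set f' : Csm n V := algebraMap ℝ (Csm n V) ((f : V → ℝ) y) +
      ∑ i, (coordFn n V i - algebraMap ℝ (Csm n V) ((y : Fin n → ℝ) i)) * gi i with hf'
    have hf'val : ∀ z : V, (f' : V → ℝ) z =
        (f : V → ℝ) y + ∑ i, ((z : Fin n → ℝ) i - (y : Fin n → ℝ) i) * G i ↑z := by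
      intro z
      have hcoe : (f' : V → ℝ) = (fun _ => (f : V → ℝ) y) +
          ∑ i, ((fun w : V => (w : Fin n → ℝ) i) - (fun _ : V => (y : Fin n → ℝ) i)) *
            (fun w : V => G i ↑w) := by
        rw [hf']
        push_cast [AddSubmonoidClass.coe_finset_sum]
        rfl
      rw [hcoe]
      simp [Finset.sum_apply]
    have hdiff0 : v (f - f') = 0 := by
      refine hloc (f - f') (extU f) (hop f) (hyextU f) ?_
      intro z hz
      have h2 : ((f - f' : Csm n V) : V → ℝ) z = (f : V → ℝ) z - (f' : V → ℝ) z := rfl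
      rw [h2, hf'val z, heq f z hz, heq f y (hyextU f)]
      have h3 := hGid (z : Fin n → ℝ)
      rw [h3]
      exact sub_self _
    have hsplit : v f = v f' + v (f - f') := by rw [map_sub]; ring
    rw [hsplit, hdiff0, add_zero, hf', map_add, hvconst, zero_add, map_sum]
    refine Finset.sum_congr rfl fun i _ => ?_
    have h2 := hder (coordFn n V i - algebraMap ℝ (Csm n V) ((y : Fin n → ℝ) i)) (gi i)
    have h3 : ((coordFn n V i - algebraMap ℝ (Csm n V) ((y : Fin n → ℝ) i) : Csm n V) :
        V → ℝ) y = 0 := by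
      have : ((coordFn n V i - algebraMap ℝ (Csm n V) ((y : Fin n → ℝ) i) : Csm n V) :
          V → ℝ) y = (y : Fin n → ℝ) i - (y : Fin n → ℝ) i := rfl
      rw [this]; ring
    have h4 : (gi i : V → ℝ) y = Df f (Pi.single i 1) := by
      show G i ↑y = _
      rw [hGc i]
    rw [h2, h3, h4, map_sub, hvconst, sub_zero, zero_mul, add_zero]
  -- the linear map Θ
  set Θ : TangentAt n V y →ₗ[ℝ] (Fin n → ℝ) :=
    { toFun := fun v => fun i => (v : Csm n V →ₗ[ℝ] ℝ) (coordFn n V i)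
      map_add' := fun v w => rfl
      map_smul' := fun c v => rfl } with hΘ
  have hinj : Function.Injective Θ := by
    intro v w hvw
    have h2 : ∀ i, (v : Csm n V →ₗ[ℝ] ℝ) (coordFn n V i) =
        (w : Csm n V →ₗ[ℝ] ℝ) (coordFn n V i) := fun i => congrFun hvw i
    apply Subtype.ext
    apply LinearMap.ext
    intro f
    rw [hformula _ v.2 f, hformula _ w.2 f]
    exact Finset.sum_congr rfl fun i _ => by rw [h2 i]
  have hsurj : Function.Surjective Θ := by
    intro a
    set ℓ : Csm n V →ₗ[ℝ] ℝ :=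
      { toFun := fun f => Df f a
        map_add' := fun f g => by
          show Df (f + g) a = Df f a + Df g a
          rw [hadd]; rfl
        map_smul' := fun c f => by
          show Df (c • f) a = c • (Df f a)
          rw [hsmul]; rfl } with hℓ
    have hderℓ : IsPtDeriv (Csm n V) y ℓ := by
      intro f g
      show Df (f * g) a = Df f a * (g : V → ℝ) y + (f : V → ℝ) y * Df g a
      rw [hmul]
      simp [ContinuousLinearMap.add_apply]
      ring
    refine ⟨⟨ℓ, hderℓ⟩, ?_⟩
    funext i
    show Df (coordFn n V i) a = a i
    rw [hcoord i]
    rfl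
  refine ⟨⟨LinearEquiv.ofBijective Θ ⟨hinj, hsurj⟩, fun v i => rfl⟩, ?_⟩
  have h2 := (LinearEquiv.ofBijective Θ ⟨hinj, hsurj⟩).rank_eq
  rw [h2, rank_fin_fun]
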